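/- Let n ≥ 2, let a_1, …, a_{n−1}, q_1, …, q_{n−1}, x_1, …, x_{n−1}, x_n, b, w_n be positive real numbers with 1 − Σ_{l=1}^{n−1} x_l/q_l > 0, and let J be the (2n−1)×(2n−1) real matrix in block form J = [[O, A, 0], [R, −b w_n I, 0], [r, 0, −b w_n]] with O the zero matrix, A = −w_n diag(a_1, …, a_{n−1}), R the (n−1)×(n−1) matrix with diagonal entries q_j − x_j and off-diagonal entries −x_j in row j, I the identity of order n−1, and r the row vector with all entries −x_n. Then there exist real numbers 0 < ξ_1 ≤ ξ_2 ≤ … ≤ ξ_{n−1}, independent of w_n, such that det(zI_{2n−1} − J) = (z + b w_n) ∏_{k=1}^{n−1}(z² + b w_n z + ξ_k w_n) for all z. -/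

import Mathlib

/-!
Regrouping the index set as `(ι ⊕ ι) ⊕ Unit` makes `zI - J` block lower triangular, which
splits off the factor `z + b wₙ`. The remaining block has scalar diagonal blocks `z I` and
`(z + b wₙ) I`, so its determinant is `det(z(z + b wₙ) I + wₙ K)` with `K = diag(a q) - (a x) 1ᵀ`,
for which `g(X) = det(X I + K)`. Conjugating by `diag u`, `u = √(a x)`, turns `K` into the
symmetric matrix `S = diag(a q) - u uᵀ`, which is positive definite by Cauchy–Schwarz because
`∑ x/q < 1`. The `ξₖ` are the eigenvalues of `S`, sorted, and the spectral theorem gives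
`det(y I + w S) = ∏ (y + w ξₖ)`.
-/

open Matrix Polynomial

namespace Matrix

variable {m R : Type*} [Fintype m] [DecidableEq m] [CommRing R]

theorem det_fromBlocks_smul_one_mul_pow (A B C : Matrix m m R) (d : R) :
    (fromBlocks A B C (d • 1)).det * d ^ Fintype.card m =
      (d • A - B * C).det * d ^ Fintype.card m := by
  have h : fromBlocks (d • 1) (-B) 0 1 * fromBlocks A B C (d • 1) =
      fromBlocks (d • A - B * C) 0 C (d • 1) := by
    simp [fromBlocks_multiply, sub_eq_add_neg]
  have := congrArg det h
  rw [det_mul, det_fromBlocks_zero₂₁, det_fromBlocks_zero₁₂] at this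
  simpa [det_smul, mul_comm] using this

theorem det_fromBlocks_smul_one₂₂ (A B C : Matrix m m R) (d : R) :
    (fromBlocks A B C (d • 1)).det = (d • A - B * C).det := by
  -- In `R[X]` the power of `d = X` is a regular element and can be cancelled; then evaluate at `d`.
  have h := det_fromBlocks_smul_one_mul_pow (A.map Polynomial.C) (B.map Polynomial.C)
    (C.map Polynomial.C) X
  rw [(isRegular_X_pow _).right.eq_iff] at h
  have := congrArg (eval d) h
  simp only [← coe_evalRingHom, RingHom.map_det] at this
  convert this using 2
  · ext (i | i) (j | j) <;> simp [one_apply]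
    split_ifs <;> simp
  · ext i j
    simp [mul_apply, eval_finsetSum, mul_comm d]

theorem det_smul_one_add_smul_eq_of_mul_eq_mul {M N P : Matrix m m R} (hP : IsUnit P.det)
    (h : M * P = P * N) (y w : R) : (y • 1 + w • M).det = (y • 1 + w • N).det := by
  have hconj : (y • 1 + w • M) * P = P * (y • 1 + w • N) := by
    simp only [add_mul, mul_add, smul_mul, Matrix.mul_smul, one_mul, mul_one, h]
  have := congrArg det hconj
  rw [det_mul, det_mul, mul_comm] at this
  exact hP.mul_left_cancel this

theorem diagonal_sub_vecMulVec_mul_diagonal (d u : m → R) :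
    (diagonal d - vecMulVec (u * u) 1) * diagonal u =
      diagonal u * (diagonal d - vecMulVec u u) := by
  ext i j
  rcases eq_or_ne i j with rfl | hij <;> simp [vecMulVec_apply, *] <;> ring

theorem IsHermitian.det_smul_one_add_smul {S : Matrix m m ℝ} (hS : S.IsHermitian) (y w : ℝ) :
    (y • 1 + w • S).det = ∏ k, (y + w * hS.eigenvalues k) := by
  have hdiag : y • 1 + w • S = Unitary.conjStarAlgAut ℝ _ hS.eigenvectorUnitary
      (diagonal fun k => y + w * hS.eigenvalues k) := by
    have : diagonal (fun k => y + w * hS.eigenvalues k) =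
        y • 1 + w • diagonal (RCLike.ofReal ∘ hS.eigenvalues) := by
      ext i j
      rcases eq_or_ne i j with rfl | hij <;> simp [*]
    rw [this, map_add, map_smul, map_smul, map_one, ← hS.spectral_theorem]
  rw [hdiag, Unitary.conjStarAlgAut_apply, det_mul_comm, ← mul_assoc,
    Unitary.coe_star_mul_self, one_mul, det_diagonal]

theorem posDef_diagonal_sub_vecMulVec {d u : m → ℝ} (hd : ∀ k, 0 < d k)
    (hu : ∑ k, u k ^ 2 / d k < 1) : (diagonal d - vecMulVec u u).PosDef := by
  have hherm : (diagonal d - vecMulVec u u).IsHermitian :=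
    (isHermitian_diagonal d).sub (by simpa using (posSemidef_vecMulVec_self_star u).isHermitian)
  refine PosDef.of_dotProduct_mulVec_pos hherm fun v hv => ?_
  have hquad : star v ⬝ᵥ ((diagonal d - vecMulVec u u) *ᵥ v) =
      ∑ k, d k * v k ^ 2 - (∑ k, u k * v k) ^ 2 := by
    rw [star_trivial, sub_mulVec, dotProduct_sub, dotProduct_mulVec v (vecMulVec u u),
      vecMul_vecMulVec, smul_dotProduct, smul_eq_mul, dotProduct_comm v u, ← sq]
    congr 1
    exact Finset.sum_congr rfl fun k _ => by rw [mulVec_diagonal]; ring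
  have hpos : 0 < ∑ k, d k * v k ^ 2 := by
    obtain ⟨k, hk⟩ := Function.ne_iff.mp hv
    exact Finset.sum_pos' (fun k _ => mul_nonneg (hd k).le (sq_nonneg _))
      ⟨k, Finset.mem_univ _, mul_pos (hd k) (pow_two_pos_of_ne_zero hk)⟩
  have hcs : (∑ k, u k * v k) ^ 2 ≤ (∑ k, u k ^ 2 / d k) * ∑ k, d k * v k ^ 2 :=
    Finset.sum_sq_le_sum_mul_sum_of_sq_le_mul _ (fun k _ => div_nonneg (sq_nonneg _) (hd k).le)
      (fun k _ => mul_nonneg (hd k).le (sq_nonneg _))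
      (fun k _ => le_of_eq (by field_simp [(hd k).ne']))
  have hlt := mul_lt_of_lt_one_left hpos hu
  rw [hquad]
  linarith

end Matrix

def jacobian {ι R : Type*} [DecidableEq ι] [Ring R] (a q x : ι → R) (xn b w : R) :
    Matrix (ι ⊕ (ι ⊕ Unit)) (ι ⊕ (ι ⊕ Unit)) R :=
  of fun i j =>
    match i, j with
    | Sum.inl _, Sum.inl _ => 0
    | Sum.inl i, Sum.inr (Sum.inl j) => if i = j then -(w * a i) else 0
    | Sum.inl _, Sum.inr (Sum.inr _) => 0
    | Sum.inr (Sum.inl i), Sum.inl j => if i = j then q i - x i else -x i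
    | Sum.inr (Sum.inl i), Sum.inr (Sum.inl j) => if i = j then -(b * w) else 0
    | Sum.inr (Sum.inl _), Sum.inr (Sum.inr _) => 0
    | Sum.inr (Sum.inr _), Sum.inl _ => -xn
    | Sum.inr (Sum.inr _), Sum.inr (Sum.inl _) => 0
    | Sum.inr (Sum.inr _), Sum.inr (Sum.inr _) => -(b * w)

theorem det_smul_one_sub_jacobian {ι R : Type*} [Fintype ι] [DecidableEq ι] [CommRing R]
    (a q x : ι → R) (xn b w z : R) :
    (z • 1 - jacobian a q x xn b w).det =
      (z + b * w) *
        ((z * (z + b * w)) • 1 + w • (diagonal (a * q) - vecMulVec (a * x) 1)).det := by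
  have hblock : (z • 1 - jacobian a q x xn b w).submatrix (Equiv.sumAssoc ι ι Unit)
      (Equiv.sumAssoc ι ι Unit) =
      fromBlocks
        (fromBlocks (z • 1) (w • diagonal a) (vecMulVec x 1 - diagonal q) ((z + b * w) • 1)) 0
        (of fun _ j => Sum.elim (fun _ => xn) 0 j) (of fun _ _ => z + b * w) := by
    ext ((i | i) | i) ((j | j) | j) <;>
      simp [jacobian, one_apply, diagonal_apply] <;> split_ifs <;> ring
  rw [← det_submatrix_equiv_self (Equiv.sumAssoc ι ι Unit), hblock, det_fromBlocks_zero₁₂,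
    det_fromBlocks_smul_one₂₂, det_unique (n := Unit), mul_comm]
  congr 2
  ext i j
  rcases eq_or_ne i j with rfl | hij <;> simp [*]
  ring

theorem stmt_11 (n : ℕ)
    (a q x : Fin (n - 1) → ℝ) (xn b : ℝ)
    (ha : ∀ k, 0 < a k) (hq : ∀ k, 0 < q k) (hx : ∀ k, 0 < x k)
    (hpos : 0 < 1 - ∑ l, x l / q l)
    (J : ℝ → Matrix (Fin (n - 1) ⊕ (Fin (n - 1) ⊕ Unit))
      (Fin (n - 1) ⊕ (Fin (n - 1) ⊕ Unit)) ℝ)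
    (hJ : ∀ wn, J wn = Matrix.of fun i j =>
      match i, j with
      | Sum.inl _, Sum.inl _ => 0
      | Sum.inl i, Sum.inr (Sum.inl j) => if i = j then -(wn * a i) else 0
      | Sum.inl _, Sum.inr (Sum.inr _) => 0
      | Sum.inr (Sum.inl i), Sum.inl j => if i = j then q i - x i else -x i
      | Sum.inr (Sum.inl i), Sum.inr (Sum.inl j) => if i = j then -(b * wn) else 0
      | Sum.inr (Sum.inl _), Sum.inr (Sum.inr _) => 0
      | Sum.inr (Sum.inr _), Sum.inl _ => -xn
      | Sum.inr (Sum.inr _), Sum.inr (Sum.inl _) => 0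
      | Sum.inr (Sum.inr _), Sum.inr (Sum.inr _) => -(b * wn)) :
    ∃ ξ : Fin (n - 1) → ℝ, (∀ k, 0 < ξ k) ∧ Monotone ξ ∧
      ∀ wn : ℝ, 0 < wn → ∀ z : ℝ,
        (z • (1 : Matrix (Fin (n - 1) ⊕ (Fin (n - 1) ⊕ Unit))
            (Fin (n - 1) ⊕ (Fin (n - 1) ⊕ Unit)) ℝ) - J wn).det =
          (z + b * wn) * ∏ k, (z ^ 2 + b * wn * z + ξ k * wn) := by
  have hax : ∀ k, 0 < a k * x k := fun k => mul_pos (ha k) (hx k)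
  set u : Fin (n - 1) → ℝ := fun k => √(a k * x k)
  have hu : u * u = a * x := funext fun k => Real.mul_self_sqrt (hax k).le
  have hS : (diagonal (a * q) - vecMulVec u u).PosDef := by
    refine posDef_diagonal_sub_vecMulVec (fun k => mul_pos (ha k) (hq k)) ?_
    calc ∑ k, u k ^ 2 / (a * q) k = ∑ k, x k / q k :=
          Finset.sum_congr rfl fun k _ => by
            simp [u, Real.sq_sqrt (hax k).le, mul_div_mul_left _ _ (ha k).ne']
      _ < 1 := by linarith
  set ξ := hS.isHermitian.eigenvalues
  refine ⟨ξ ∘ Tuple.sort ξ, fun k => hS.eigenvalues_pos _, Tuple.monotone_sort ξ,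
    fun wn _ z => ?_⟩
  have hJwn : J wn = jacobian a q x xn b wn := by
    rw [hJ]
    ext (i | i | i) (j | j | j) <;> rfl
  have hdiag_u : IsUnit (diagonal u).det := by
    simpa [det_diagonal, Finset.prod_ne_zero_iff] using fun k => (Real.sqrt_pos.2 (hax k)).ne'
  rw [hJwn, det_smul_one_sub_jacobian, ← hu,
    det_smul_one_add_smul_eq_of_mul_eq_mul hdiag_u (diagonal_sub_vecMulVec_mul_diagonal _ _),
    hS.isHermitian.det_smul_one_add_smul, Function.comp_def,
    Equiv.prod_comp (Tuple.sort ξ) fun k => z ^ 2 + b * wn * z + ξ k * wn]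
  congr 1
  exact Finset.prod_congr rfl fun k _ => by ring
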